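/- Let K ≥ 1, let s_1, …, s_K and γ_1, …, γ_K be positive reals, set η_k = s_k/(1+γ_k^{-1}), and assume η_1 ≥ η_2 ≥ … ≥ η_K. Let P_tot > 0, define A(k) = Σ_{m=1}^k γ_m/√η_m and B(k) = Σ_{m=1}^k γ_m/η_m + P_tot, let K_1 ∈ {1,…,K} satisfy √η_{K_1} B(K_1)/A(K_1) − 1 > 0 and (K_1 = K or √η_{K_1+1} B(K_1+1)/A(K_1+1) − 1 ≤ 0), and set c_0 = B(K_1)/A(K_1). Define α*_k = (γ_k/s_k)(c_0 √η_k − 1) for k ≤ K_1 and α*_k = 0 for k > K_1. Then α* is feasible, i.e., α*_k ≥ 0 for all k and Σ_{k=1}^K α*_k (1+γ_k^{-1}) ≤ P_tot, and for every α ∈ ℝ^K with α_k ≥ 0 for all k and Σ_{k=1}^K α_k (1+γ_k^{-1}) ≤ P_tot, one has Σ_{k=1}^K α_k s_k/(γ_k^{-1} α_k s_k + 1) ≤ Σ_{k=1}^K α*_k s_k/(γ_k^{-1} α*_k s_k + 1); i.e., α* minimizes the BLUE distortion σ_θ^2 ( Σ_k α_k s_k/(γ_k^{-1} α_k s_k +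 1) )^{-1} subject to the sum power constraint. -/

import Mathlib

/-!
Measured in transmit power `t = α (1 + γ⁻¹)`, the `k`-th summand is the concave function
`γ η t / (η t + γ)`, so it suffices to check the KKT conditions for `α*` with multiplier
`1 / c₀²`: every summand lies below its tangent line at `α*_k`. For an active sensor
`γ⁻¹ α*_k s_k + 1 = c₀ √η_k`, which makes the slope per unit of power exactly `1 / c₀²`; for an
inactive one the slope at `0` is `η_k ≤ 1 / c₀²` because `c₀ √η_k ≤ 1`. Since `α*` spends the
whole budget, summing the tangent bounds gives the claim. The choice of `K₁` and the ordering of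
the `η_k` make `c₀ √η_k ≥ 1` exactly for `k ≤ K₁`.
-/

open Finset

/-- `A(k) = ∑_{m=1}^k γ_m/√η_m`. -/
noncomputable def sensA (γ η : ℕ → ℝ) (k : ℕ) : ℝ :=
  ∑ m ∈ Finset.Icc 1 k, γ m / Real.sqrt (η m)

/-- `B(k) = ∑_{m=1}^k γ_m/η_m + P_tot`. -/
noncomputable def sensB (γ η : ℕ → ℝ) (Ptot : ℝ) (k : ℕ) : ℝ :=
  (∑ m ∈ Finset.Icc 1 k, γ m / η m) + Ptot

theorem Finset.sum_le_sum_of_le_add_mul_sub {ι : Type*} {s : Finset ι} {F G u v : ι → ℝ} {μ : ℝ}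
    (hμ : 0 ≤ μ) (h : ∀ i ∈ s, F i ≤ G i + μ * (u i - v i))
    (huv : ∑ i ∈ s, u i ≤ ∑ i ∈ s, v i) : ∑ i ∈ s, F i ≤ ∑ i ∈ s, G i := by
  calc ∑ i ∈ s, F i ≤ ∑ i ∈ s, (G i + μ * (u i - v i)) := sum_le_sum h
    _ = ∑ i ∈ s, G i + μ * (∑ i ∈ s, u i - ∑ i ∈ s, v i) := by
      rw [sum_add_distrib, ← mul_sum, sum_sub_distrib]
    _ ≤ ∑ i ∈ s, G i := by nlinarith

theorem mul_div_mul_add_one_le_tangent {a b x y : ℝ} (ha : 0 ≤ a) (hb : 0 ≤ b) (hx : 0 ≤ x)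
    (hy : 0 ≤ y) :
    x * a / (b * x * a + 1) ≤ y * a / (b * y * a + 1) + a / (b * y * a + 1) ^ 2 * (x - y) := by
  have hx' : 0 < b * x * a + 1 := by positivity
  have hy' : 0 < b * y * a + 1 := by positivity
  have key : y * a / (b * y * a + 1) + a / (b * y * a + 1) ^ 2 * (x - y) - x * a / (b * x * a + 1)
      = a ^ 2 * b * (x - y) ^ 2 / ((b * y * a + 1) ^ 2 * (b * x * a + 1)) := by
    field_simp
    ring
  have : 0 ≤ a ^ 2 * b * (x - y) ^ 2 / ((b * y * a + 1) ^ 2 * (b * x * a + 1)) := by positivity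
  linarith

section Sensor

variable {s γ η c x y : ℝ}

theorem inv_mul_waterfill_add_one (hs : 0 < s) (hγ : 0 < γ) :
    γ⁻¹ * (γ / s * (c * √η - 1)) * s + 1 = c * √η := by
  field_simp
  ring

theorem sq_mul_sqrt_eq (hs : 0 < s) (hγ : 0 < γ) (hη : η = s / (1 + γ⁻¹)) :
    (c * √η) ^ 2 = c ^ 2 * s / (1 + γ⁻¹) := by
  rw [mul_pow, Real.sq_sqrt (by rw [hη]; positivity), hη, mul_div_assoc]

theorem waterfill_nonneg (hs : 0 < s) (hγ : 0 < γ)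
    (hy : (1 ≤ c * √η ∧ y = γ / s * (c * √η - 1)) ∨ (c * √η ≤ 1 ∧ y = 0)) : 0 ≤ y := by
  rcases hy with ⟨hact, rfl⟩ | ⟨-, rfl⟩
  · exact mul_nonneg (by positivity) (by linarith)
  · exact le_rfl

theorem sensor_le_tangent (hs : 0 < s) (hγ : 0 < γ) (hη : η = s / (1 + γ⁻¹)) (hc : 0 < c)
    (hx : 0 ≤ x)
    (hy : (1 ≤ c * √η ∧ y = γ / s * (c * √η - 1)) ∨ (c * √η ≤ 1 ∧ y = 0)) :
    x * s / (γ⁻¹ * x * s + 1) ≤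
      y * s / (γ⁻¹ * y * s + 1) + 1 / c ^ 2 * (x * (1 + γ⁻¹) - y * (1 + γ⁻¹)) := by
  have htan := mul_div_mul_add_one_le_tangent hs.le (inv_nonneg.2 hγ.le) hx
    (waterfill_nonneg hs hγ hy)
  have hsq := sq_mul_sqrt_eq (c := c) hs hγ hη
  rcases hy with ⟨-, rfl⟩ | ⟨hinact, rfl⟩
  · have hslope : s / (γ⁻¹ * (γ / s * (c * √η - 1)) * s + 1) ^ 2 = (1 + γ⁻¹) / c ^ 2 := by
      rw [inv_mul_waterfill_add_one hs hγ, hsq]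
      field_simp
    rw [hslope] at htan
    exact htan.trans_eq (by ring)
  · have hslope : s ≤ (1 + γ⁻¹) / c ^ 2 := by
      have : c ^ 2 * s / (1 + γ⁻¹) ≤ 1 := by
        rw [← hsq]; exact pow_le_one₀ (by positivity) hinact
      rw [le_div_iff₀ (by positivity)]
      rw [div_le_one (by positivity)] at this
      linarith
    have := mul_le_mul_of_nonneg_right hslope hx
    simp only [mul_zero, zero_mul, zero_add, sub_zero, div_one, one_pow] at htan ⊢
    exact htan.trans (this.trans_eq (by ring))

theorem waterfill_mul_power (hs : 0 < s) (hγ : 0 < γ) (hη : η = s / (1 + γ⁻¹)) :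
    γ / s * (c * √η - 1) * (1 + γ⁻¹) = c * (γ / √η) - γ / η := by
  have hη0 : 0 < η := by rw [hη]; positivity
  have hsη : s = η * (1 + γ⁻¹) := by rw [hη]; field_simp
  rw [hsη]
  field_simp
  linear_combination c * Real.mul_self_sqrt hη0.le

end Sensor

section Thresholds

variable {γ η : ℕ → ℝ} {Ptot : ℝ} {k : ℕ}

theorem sensA_succ :
    sensA γ η (k + 1) = sensA γ η k + γ (k + 1) / √(η (k + 1)) :=
  sum_Icc_succ_top (by omega) _

theorem sensB_succ :
    sensB γ η Ptot (k + 1) = sensB γ η Ptot k + γ (k + 1) / η (k + 1) := by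
  unfold sensB
  rw [sum_Icc_succ_top (by omega)]
  ring

theorem sensA_pos (hk : 1 ≤ k) (hγ : ∀ m ∈ Icc 1 k, 0 < γ m) (hη : ∀ m ∈ Icc 1 k, 0 < η m) :
    0 < sensA γ η k :=
  sum_pos (fun m hm => div_pos (hγ m hm) (Real.sqrt_pos.2 (hη m hm))) ⟨1, mem_Icc.2 ⟨le_rfl, hk⟩⟩

/-- Sensor `k + 1` adds `γ_{k+1}/η_{k+1}` to `B` and `√η_{k+1}` times as much to `A`, so it does
not change whether `√η_{k+1} B ≤ A`. -/
theorem sensB_div_sensA_mul_sqrt_le_one (hγ : 0 ≤ γ (k + 1)) (hη : 0 < η (k + 1))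
    (hA : 0 < sensA γ η k)
    (h : √(η (k + 1)) * sensB γ η Ptot (k + 1) / sensA γ η (k + 1) - 1 ≤ 0) :
    sensB γ η Ptot k / sensA γ η k * √(η (k + 1)) ≤ 1 := by
  have hsqrt : 0 < √(η (k + 1)) := Real.sqrt_pos.2 hη
  have hA' : 0 < sensA γ η (k + 1) := by
    rw [sensA_succ]
    positivity
  have hcancel : √(η (k + 1)) * (γ (k + 1) / η (k + 1)) = γ (k + 1) / √(η (k + 1)) := by
    field_simp
    rw [Real.sq_sqrt hη.le]
    ring
  rw [sub_nonpos, div_le_one hA', sensA_succ, sensB_succ, mul_add, hcancel] at h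
  rw [div_mul_eq_mul_div, div_le_one hA]
  linarith

end Thresholds

section Allocation

variable {K K₁ : ℕ} {s γ η αopt : ℕ → ℝ} {Ptot c₀ : ℝ}

theorem waterfill_cases (hrank : ∀ j k, 1 ≤ j → j ≤ k → k ≤ K → η k ≤ η j)
    (hK₁K : K₁ ≤ K) (hc₀ : 0 < c₀) (hlevel : 1 < c₀ * √(η K₁))
    (hlevel' : K₁ = K ∨ c₀ * √(η (K₁ + 1)) ≤ 1)
    (hαopt : ∀ k, 1 ≤ k → k ≤ K →
      αopt k = if k ≤ K₁ then γ k / s k * (c₀ * √(η k) - 1) else 0)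
    {k : ℕ} (h1 : 1 ≤ k) (hk : k ≤ K) :
    (1 ≤ c₀ * √(η k) ∧ αopt k = γ k / s k * (c₀ * √(η k) - 1)) ∨
      (c₀ * √(η k) ≤ 1 ∧ αopt k = 0) := by
  rw [hαopt k h1 hk]
  split_ifs with hkK₁
  · refine .inl ⟨hlevel.le.trans ?_, rfl⟩
    gcongr
    exact hrank k K₁ h1 hkK₁ hK₁K
  · refine .inr ⟨?_, rfl⟩
    rcases hlevel' with rfl | hlevel'
    · omega
    refine le_trans ?_ hlevel'
    gcongr
    exact hrank (K₁ + 1) k (by omega) (by omega) hk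

theorem sum_waterfill_power (hK₁K : K₁ ≤ K) (hs : ∀ k, 1 ≤ k → k ≤ K → 0 < s k)
    (hγ : ∀ k, 1 ≤ k → k ≤ K → 0 < γ k) (hη : ∀ k, η k = s k / (1 + (γ k)⁻¹))
    (hA : 0 < sensA γ η K₁) (hc₀ : c₀ = sensB γ η Ptot K₁ / sensA γ η K₁)
    (hαopt : ∀ k, 1 ≤ k → k ≤ K →
      αopt k = if k ≤ K₁ then γ k / s k * (c₀ * √(η k) - 1) else 0) :
    ∑ k ∈ Icc 1 K, αopt k * (1 + (γ k)⁻¹) = Ptot := by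
  have hactive : ∀ k ∈ Icc 1 K₁, αopt k * (1 + (γ k)⁻¹) = c₀ * (γ k / √(η k)) - γ k / η k := by
    intro k hk
    obtain ⟨h1, hk⟩ := mem_Icc.1 hk
    rw [hαopt k h1 (hk.trans hK₁K), if_pos hk]
    exact waterfill_mul_power (hs k h1 (hk.trans hK₁K)) (hγ k h1 (hk.trans hK₁K)) (hη k)
  have hinactive : ∀ k ∈ Icc 1 K, k ∉ Icc 1 K₁ → αopt k * (1 + (γ k)⁻¹) = 0 := by
    intro k hk hk'
    obtain ⟨h1, h2⟩ := mem_Icc.1 hk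
    rw [hαopt k h1 h2, if_neg (fun h => hk' (mem_Icc.2 ⟨h1, h⟩)), zero_mul]
  calc ∑ k ∈ Icc 1 K, αopt k * (1 + (γ k)⁻¹)
      = ∑ k ∈ Icc 1 K₁, (c₀ * (γ k / √(η k)) - γ k / η k) := by
        rw [← sum_subset (Icc_subset_Icc_right hK₁K) hinactive, sum_congr rfl hactive]
    _ = c₀ * sensA γ η K₁ - (sensB γ η Ptot K₁ - Ptot) := by
        rw [sum_sub_distrib, ← mul_sum]
        unfold sensA sensB
        ring
    _ = Ptot := by
        rw [hc₀, div_mul_cancel₀ _ hA.ne']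
        ring

end Allocation

theorem stmt_14_general (K : ℕ) (s γ η : ℕ → ℝ)
    (hs : ∀ k, 1 ≤ k → k ≤ K → 0 < s k)
    (hγ : ∀ k, 1 ≤ k → k ≤ K → 0 < γ k)
    (hη : ∀ k, η k = s k / (1 + (γ k)⁻¹))
    (hrank : ∀ j k, 1 ≤ j → j ≤ k → k ≤ K → η k ≤ η j)
    (Ptot : ℝ)
    (K₁ : ℕ) (hK₁ : K₁ ∈ Finset.Icc 1 K)
    (hf : 0 < Real.sqrt (η K₁) * sensB γ η Ptot K₁ / sensA γ η K₁ - 1)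
    (hf' : K₁ = K ∨
      Real.sqrt (η (K₁ + 1)) * sensB γ η Ptot (K₁ + 1) / sensA γ η (K₁ + 1) - 1 ≤ 0)
    (c₀ : ℝ) (hc₀ : c₀ = sensB γ η Ptot K₁ / sensA γ η K₁)
    (αopt : ℕ → ℝ)
    (hαopt : ∀ k, 1 ≤ k → k ≤ K →
      αopt k = if k ≤ K₁ then γ k / s k * (c₀ * Real.sqrt (η k) - 1) else 0) :
    (∀ k, 1 ≤ k → k ≤ K → 0 ≤ αopt k) ∧
    (∑ k ∈ Finset.Icc 1 K, αopt k * (1 + (γ k)⁻¹) ≤ Ptot) ∧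
    (∀ α : ℕ → ℝ, (∀ k, 1 ≤ k → k ≤ K → 0 ≤ α k) →
      (∑ k ∈ Finset.Icc 1 K, α k * (1 + (γ k)⁻¹) ≤ Ptot) →
      ∑ k ∈ Finset.Icc 1 K, α k * s k / ((γ k)⁻¹ * α k * s k + 1) ≤
        ∑ k ∈ Finset.Icc 1 K, αopt k * s k / ((γ k)⁻¹ * αopt k * s k + 1)) := by
  obtain ⟨hK₁1, hK₁K⟩ := mem_Icc.1 hK₁
  have hηpos : ∀ k, 1 ≤ k → k ≤ K → 0 < η k := fun k h1 h2 => by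
    have := hs k h1 h2; have := hγ k h1 h2
    rw [hη k]; positivity
  have hA : 0 < sensA γ η K₁ := sensA_pos hK₁1
    (fun m hm => hγ m (mem_Icc.1 hm).1 ((mem_Icc.1 hm).2.trans hK₁K))
    (fun m hm => hηpos m (mem_Icc.1 hm).1 ((mem_Icc.1 hm).2.trans hK₁K))
  have hlevel : 1 < c₀ * √(η K₁) := by
    rw [hc₀, div_mul_eq_mul_div, mul_comm]
    linarith
  have hc : 0 < c₀ := pos_of_mul_pos_left (one_pos.trans hlevel) (Real.sqrt_nonneg _)
  have hlevel' : K₁ = K ∨ c₀ * √(η (K₁ + 1)) ≤ 1 := by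
    refine (eq_or_lt_of_le hK₁K).imp id fun hlt => ?_
    rw [hc₀]
    exact sensB_div_sensA_mul_sqrt_le_one (hγ _ (by omega) hlt).le (hηpos _ (by omega) hlt) hA
      (hf'.resolve_left hlt.ne)
  have hcases := fun k h1 h2 => waterfill_cases (s := s) (γ := γ) hrank hK₁K hc hlevel hlevel' hαopt
    (k := k) h1 h2
  have hpower := sum_waterfill_power hK₁K hs hγ hη hA hc₀ hαopt
  refine ⟨fun k h1 h2 => waterfill_nonneg (hs k h1 h2) (hγ k h1 h2) (hcases k h1 h2),
    hpower.le, fun α hα hαP => ?_⟩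
  refine sum_le_sum_of_le_add_mul_sub (by positivity : 0 ≤ 1 / c₀ ^ 2) (fun k hk => ?_)
    (hαP.trans hpower.ge)
  obtain ⟨h1, h2⟩ := mem_Icc.1 hk
  exact sensor_le_tangent (hs k h1 h2) (hγ k h1 h2) (hη k) hc (hα k h1 h2) (hcases k h1 h2)

/-- Optimality of the water-filling style power allocation
`α*_k = (γ_k/s_k)(c₀√η_k − 1)` for `k ≤ K₁` and `α*_k = 0` for `k > K₁`
(with `c₀ = B(K₁)/A(K₁)`): it is feasible for the sum power constraint and
maximizes the inverse BLUE distortion `∑ α_k s_k/(γ_k⁻¹ α_k s_k + 1)`, i.e.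
minimizes the BLUE distortion. -/
theorem stmt_14 (K : ℕ) (hK : 1 ≤ K) (s γ η : ℕ → ℝ)
    (hs : ∀ k, 1 ≤ k → k ≤ K → 0 < s k)
    (hγ : ∀ k, 1 ≤ k → k ≤ K → 0 < γ k)
    (hη : ∀ k, η k = s k / (1 + (γ k)⁻¹))
    (hrank : ∀ j k, 1 ≤ j → j ≤ k → k ≤ K → η k ≤ η j)
    (Ptot : ℝ) (hP : 0 < Ptot)
    (K₁ : ℕ) (hK₁ : K₁ ∈ Finset.Icc 1 K)
    (hf : 0 < Real.sqrt (η K₁) * sensB γ η Ptot K₁ / sensA γ η K₁ - 1)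
    (hf' : K₁ = K ∨
      Real.sqrt (η (K₁ + 1)) * sensB γ η Ptot (K₁ + 1) / sensA γ η (K₁ + 1) - 1 ≤ 0)
    (c₀ : ℝ) (hc₀ : c₀ = sensB γ η Ptot K₁ / sensA γ η K₁)
    (αopt : ℕ → ℝ)
    (hαopt : ∀ k, 1 ≤ k → k ≤ K →
      αopt k = if k ≤ K₁ then γ k / s k * (c₀ * Real.sqrt (η k) - 1) else 0) :
    (∀ k, 1 ≤ k → k ≤ K → 0 ≤ αopt k) ∧
    (∑ k ∈ Finset.Icc 1 K, αopt k * (1 + (γ k)⁻¹) ≤ Ptot) ∧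
    (∀ α : ℕ → ℝ, (∀ k, 1 ≤ k → k ≤ K → 0 ≤ α k) →
      (∑ k ∈ Finset.Icc 1 K, α k * (1 + (γ k)⁻¹) ≤ Ptot) →
      ∑ k ∈ Finset.Icc 1 K, α k * s k / ((γ k)⁻¹ * α k * s k + 1) ≤
        ∑ k ∈ Finset.Icc 1 K, αopt k * s k / ((γ k)⁻¹ * αopt k * s k + 1)) :=
  stmt_14_general K s γ η hs hγ hη hrank Ptot K₁ hK₁ hf hf' c₀ hc₀ αopt hαopt
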